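/- For all complex numbers a, b, real q ≥ 4, and t ∈ [0,1], the bound | |a+t(b−a)|^{q−4}·conj((a+t(b−a))²) − |a|^{q−4}·conj(a²) | ≤ (q−2)·2^{q−4}·(|a|^{q−3} + |b−a|^{q−3})·|b−a| holds. -/

import Mathlib

/-!
Write `p = q - 4 ≥ 0` and `f(z) = |z|^p z²`, so the left-hand side is `|f(w) - f(a)|` for
`w = a + t(b - a)` (conjugation is an isometry and commutes with the real factors). On the disc
`|z| ≤ M` the map `f` is `(p + 2) M^(p+1)`-Lipschitz: if `|z| ≤ |w|`, split
`f(w) - f(z) = |w|^p (w² - z²) + (|w|^p - |z|^p) z²`; the first term is at most `2 |w|^(p+1) |w - z|`,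
and the second is controlled by the weighted AM-GM inequality `(p + 1) x^p y ≤ p x^(p+1) + y^(p+1)`.
With `M = |a| + |b - a|` and `|w - a| ≤ |b - a|`, the power-mean inequality gives `M^(q-3) ≤ 2^(q-4)(|a|^(q-3) + |b-a|^(q-3))`.
-/

open Complex
open scoped NNReal

namespace Real

lemma rpow_add_le_mul_rpow_add_rpow {x y r : ℝ} (hx : 0 ≤ x) (hy : 0 ≤ y) (hr : 1 ≤ r) :
    (x + y) ^ r ≤ 2 ^ (r - 1) * (x ^ r + y ^ r) := by
  lift x to ℝ≥0 using hx
  lift y to ℝ≥0 using hy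
  exact_mod_cast NNReal.rpow_add_le_mul_rpow_add_rpow x y hr

lemma rpow_sub_rpow_mul_le {x y p : ℝ} (hx : 0 ≤ x) (hy : 0 ≤ y) (hp : 0 ≤ p) :
    (x ^ p - y ^ p) * y ≤ p * x ^ p * (x - y) := by
  have hp1 : 0 < p + 1 := by linarith
  have amgm := geom_mean_le_arith_mean2_weighted (div_nonneg hp hp1.le)
    (one_div_nonneg.2 hp1.le) (rpow_nonneg hx (p + 1)) (rpow_nonneg hy (p + 1)) (by field_simp)
  rw [← rpow_mul hx, ← rpow_mul hy, mul_div_cancel₀ _ hp1.ne', mul_one_div_cancel hp1.ne',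
    rpow_one, rpow_add_one' hx hp1.ne', rpow_add_one' hy hp1.ne'] at amgm
  field_simp at amgm
  linarith

end Real

section

variable {R : Type*} [NormedCommRing R] [NormedAlgebra ℝ R] {p : ℝ}

lemma norm_rpow_smul_sq_sub_le_of_norm_le {w z : R} (hp : 0 ≤ p) (hzw : ‖z‖ ≤ ‖w‖) :
    ‖‖w‖ ^ p • w ^ 2 - ‖z‖ ^ p • z ^ 2‖ ≤ (p + 2) * ‖w‖ ^ (p + 1) * ‖w - z‖ := by
  set x := ‖w‖
  set y := ‖z‖
  have hx : 0 ≤ x := norm_nonneg w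
  have hy : 0 ≤ y := norm_nonneg z
  have hδ : x - y ≤ ‖w - z‖ := norm_sub_norm_le w z
  have hsq : ‖w ^ 2 - z ^ 2‖ ≤ 2 * x * ‖w - z‖ := calc
    ‖w ^ 2 - z ^ 2‖ = ‖(w - z) * (w + z)‖ := by ring_nf
    _ ≤ ‖w - z‖ * (x + y) := norm_mul_le_of_le le_rfl (norm_add_le w z)
    _ ≤ 2 * x * ‖w - z‖ := by nlinarith [norm_nonneg (w - z)]
  have hpow : (x ^ p - y ^ p) * y ^ 2 ≤ p * x ^ p * x * ‖w - z‖ := calc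
    (x ^ p - y ^ p) * y ^ 2 = (x ^ p - y ^ p) * y * y := by ring
    _ ≤ p * x ^ p * (x - y) * x := by
      gcongr ?_ * ?_
      exact Real.rpow_sub_rpow_mul_le hx hy hp
    _ ≤ p * x ^ p * x * ‖w - z‖ := by
      have : 0 ≤ p * x ^ p * x := by positivity
      nlinarith
  calc ‖x ^ p • w ^ 2 - y ^ p • z ^ 2‖
      = ‖x ^ p • (w ^ 2 - z ^ 2) + (x ^ p - y ^ p) • z ^ 2‖ := by
        rw [smul_sub, sub_smul]; abel_nf
    _ ≤ x ^ p * ‖w ^ 2 - z ^ 2‖ + (x ^ p - y ^ p) * ‖z ^ 2‖ := by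
        refine (norm_add_le _ _).trans_eq ?_
        rw [norm_smul, norm_smul, Real.norm_of_nonneg (by positivity),
          Real.norm_of_nonneg (sub_nonneg.2 (Real.rpow_le_rpow hy hzw hp))]
    _ ≤ x ^ p * (2 * x * ‖w - z‖) + (x ^ p - y ^ p) * y ^ 2 := by
        gcongr
        · exact sub_nonneg.2 (Real.rpow_le_rpow hy hzw hp)
        · exact norm_pow_le' z two_pos
    _ ≤ (p + 2) * x ^ (p + 1) * ‖w - z‖ := by
        rw [Real.rpow_add_one' hx (by linarith)]
        nlinarith

lemma norm_rpow_smul_sq_sub_le {w z : R} {M : ℝ} (hp : 0 ≤ p) (hw : ‖w‖ ≤ M) (hz : ‖z‖ ≤ M) :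
    ‖‖w‖ ^ p • w ^ 2 - ‖z‖ ^ p • z ^ 2‖ ≤ (p + 2) * M ^ (p + 1) * ‖w - z‖ := by
  wlog hzw : ‖z‖ ≤ ‖w‖ generalizing w z
  · rw [norm_sub_rev, norm_sub_rev w]
    exact this hz hw (le_of_not_ge hzw)
  refine (norm_rpow_smul_sq_sub_le_of_norm_le hp hzw).trans ?_
  gcongr

end

theorem stmt9 (a b : ℂ) (q : ℝ) (hq : 4 ≤ q) (t : ℝ) (ht0 : 0 ≤ t) (ht1 : t ≤ 1) :
    ‖(((‖(a + (t : ℂ) * (b - a))‖ ^ (q - 4) : ℝ) : ℂ)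
            * (starRingEnd ℂ) ((a + (t : ℂ) * (b - a)) ^ 2)
          - ((‖a‖ ^ (q - 4) : ℝ) : ℂ) * (starRingEnd ℂ) (a ^ 2))‖
      ≤ (q - 2) * 2 ^ (q - 4) * (‖a‖ ^ (q - 3) + ‖(b - a)‖ ^ (q - 3))
          * ‖(b - a)‖ := by
  set w := a + (t : ℂ) * (b - a)
  have hwa : ‖w - a‖ ≤ ‖b - a‖ := by
    rw [show w - a = (t : ℂ) * (b - a) by ring, norm_mul, norm_real, Real.norm_of_nonneg ht0]
    exact mul_le_of_le_one_left (norm_nonneg _) ht1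
  have hw : ‖w‖ ≤ ‖a‖ + ‖b - a‖ := by
    simpa using norm_add_le_of_le (le_refl ‖a‖) hwa
  have hLip := norm_rpow_smul_sq_sub_le (p := q - 4) (by linarith) hw
    (le_add_of_nonneg_right (norm_nonneg (b - a)))
  have hpowMean := Real.rpow_add_le_mul_rpow_add_rpow (norm_nonneg a) (norm_nonneg (b - a))
    (show 1 ≤ q - 3 by linarith)
  calc _ = ‖‖w‖ ^ (q - 4) • w ^ 2 - ‖a‖ ^ (q - 4) • a ^ 2‖ := by
        rw [← norm_conj]; simp only [real_smul, map_sub, map_mul, conj_ofReal, conj_conj]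
    _ ≤ (q - 4 + 2) * (‖a‖ + ‖b - a‖) ^ (q - 4 + 1) * ‖w - a‖ := hLip
    _ ≤ (q - 2) * (2 ^ (q - 4) * (‖a‖ ^ (q - 3) + ‖b - a‖ ^ (q - 3))) * ‖b - a‖ := by
        rw [show q - 4 + 2 = q - 2 by ring, show q - 4 + 1 = q - 3 by ring]
        rw [show q - 3 - 1 = q - 4 by ring] at hpowMean
        have hq2 : 0 ≤ q - 2 := by linarith
        gcongr
    _ = _ := by ring
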